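/- arXiv:1712.00129 — 2 statements merged into one kernel-verified Lean document; each statement's English description precedes it below -/
import Mathlib

section
/- Let G = (Z/2Z)^10 and C = {x in G : weight(x) > 6}. Then C + C = G \ C, i.e., the sumset C + C equals the set of elements of G of weight at most 6. -/
open Pointwise

def wt (x : Fin 10 → ZMod 2) : ℕ := (Finset.univ.filter (fun i => x i = 1)).card

lemma zc : ∀ a : ZMod 2, a = 0 ∨ a = 1 := by decide

lemma wt_add_le (x y : Fin 10 → ZMod 2) (hx : 6 < wt x) (hy : 6 < wt y) :
    wt (x + y) ≤ 6 := by
  classical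
  set A := Finset.univ.filter (fun i => x i = 1) with hA
  set B := Finset.univ.filter (fun i => y i = 1) with hB
  have hsub : Finset.univ.filter (fun i => (x + y) i = 1) ⊆ Finset.univ \ (A ∩ B) := by
    intro i hi
    simp only [Finset.mem_filter, Finset.mem_univ, true_and, Pi.add_apply] at hi
    simp only [Finset.mem_sdiff, Finset.mem_univ, true_and, Finset.mem_inter, hA, hB,
      Finset.mem_filter]
    rintro ⟨h1, h2⟩
    rw [h1, h2] at hi
    exact absurd hi (by decide)
  have h1 : wt (x + y) ≤ (Finset.univ \ (A ∩ B)).card := Finset.card_le_card hsub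
  have h2 : (Finset.univ \ (A ∩ B)).card = 10 - (A ∩ B).card := by
    rw [Finset.card_sdiff_of_subset (Finset.subset_univ _)]
    simp
  have h3 : (A ∪ B).card + (A ∩ B).card = A.card + B.card :=
    Finset.card_union_add_card_inter A B
  have h4 : (A ∪ B).card ≤ 10 := by simpa using Finset.card_le_univ (A ∪ B)
  have hxA : 6 < A.card := hx
  have hyB : 6 < B.card := hy
  omega

lemma exists_decomp (x : Fin 10 → ZMod 2) (hx : wt x ≤ 6) :
    ∃ a : Fin 10 → ZMod 2, 6 < wt a ∧ 6 < wt (a + x) := by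
  classical
  set S := Finset.univ.filter (fun i => x i = 1) with hS
  have hk : S.card ≤ 6 := hx
  obtain ⟨T, hTS, hT⟩ := Finset.exists_subset_card_eq (s := S) (n := S.card - 3) (Nat.sub_le _ _)
  refine ⟨fun i => if i ∈ T ∨ i ∉ S then 1 else 0, ?_, ?_⟩
  · have heq : Finset.univ.filter
        (fun i => (if i ∈ T ∨ i ∉ S then (1 : ZMod 2) else 0) = 1)
        = T ∪ (Finset.univ \ S) := by
      ext i
      by_cases h : i ∈ T ∨ i ∉ S <;> simp [h]
      · tauto
      · push_neg at h; tauto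
    have hdisj : Disjoint T (Finset.univ \ S) := by
      intro u huT huS
      intro i hi
      exact absurd (hTS (huT hi)) (Finset.mem_sdiff.mp (huS hi)).2
    have hcard : (T ∪ (Finset.univ \ S)).card = T.card + (Finset.univ \ S).card :=
      Finset.card_union_of_disjoint hdisj
    have hSd : (Finset.univ \ S).card = 10 - S.card := by
      rw [Finset.card_sdiff_of_subset (Finset.subset_univ _)]; simp
    unfold wt
    rw [heq, hcard, hSd, hT]
    omega
  · have heq : Finset.univ.filter
        (fun i => ((fun i => if i ∈ T ∨ i ∉ S then (1 : ZMod 2) else 0) + x) i = 1)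
        = (S \ T) ∪ (Finset.univ \ S) := by
      ext i
      simp only [Finset.mem_filter, Finset.mem_univ, true_and, Pi.add_apply,
        Finset.mem_union, Finset.mem_sdiff]
      have hxS : i ∈ S ↔ x i = 1 := by simp [hS]
      by_cases hiS : i ∈ S
      · have hxi : x i = 1 := hxS.mp hiS
        by_cases hiT : i ∈ T
        · simp [hiT, hxi, hiS]
        · have : ¬(i ∈ T ∨ i ∉ S) := by tauto
          simp [this, hxi, hiS, hiT]
      · have hxi : x i = 0 := by
          rcases zc (x i) with h | h
          · exact h
          · exact absurd (hxS.mpr h) hiS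
        have : (i ∈ T ∨ i ∉ S) := Or.inr hiS
        simp [this, hxi, hiS]
    have hdisj : Disjoint (S \ T) (Finset.univ \ S) := by
      intro u hu1 hu2 i hi
      exact absurd (Finset.mem_sdiff.mp (hu1 hi)).1 (Finset.mem_sdiff.mp (hu2 hi)).2
    have hcard : ((S \ T) ∪ (Finset.univ \ S)).card = (S \ T).card + (Finset.univ \ S).card :=
      Finset.card_union_of_disjoint hdisj
    have hST : (S \ T).card = S.card - T.card := Finset.card_sdiff_of_subset hTS
    have hSd : (Finset.univ \ S).card = 10 - S.card := by
      rw [Finset.card_sdiff_of_subset (Finset.subset_univ _)]; simp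
    have hTle : T.card ≤ S.card := Finset.card_le_card hTS
    unfold wt
    rw [heq, hcard, hST, hSd, hT]
    omega

theorem stmt_2 :
    ({x : Fin 10 → ZMod 2 | 6 < wt x} + {x : Fin 10 → ZMod 2 | 6 < wt x}) =
      {x : Fin 10 → ZMod 2 | 6 < wt x}ᶜ := by
  ext z
  simp only [Set.mem_add, Set.mem_setOf_eq, Set.mem_compl_iff, not_lt]
  constructor
  · rintro ⟨a, ha, b, hb, rfl⟩
    exact wt_add_le a b ha hb
  · intro hz
    obtain ⟨a, ha1, ha2⟩ := exists_decomp z hz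
    refine ⟨a, ha1, a + z, ha2, ?_⟩
    funext i
    have : ∀ u v : ZMod 2, u + (u + v) = v := by decide
    exact this (a i) (z i)
end

section
/- Let U be a set partitioned into three parts of equal size, and let x, y ∈ U. If a uniformly random equal partition of U into three parts is chosen, the probability that a fixed set Z of m elements of U (disjoint from {x,y}) is entirely contained in the union of the two parts containing x and y is at most (2/3)^m. -/
open Finset

namespace Stmt16Aux

variable {U : Type*} [Fintype U] [DecidableEq U]

/-- a color different from both `a` and `b`. -/
def third (a b : Fin 3) : Fin 3 :=
  if a ≠ 0 ∧ b ≠ 0 then 0 else if a ≠ 1 ∧ b ≠ 1 then 1 else 2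

lemma third_ne (a b : Fin 3) : third a b ≠ a ∧ third a b ≠ b := by revert a b; decide

/-- The set of balanced colorings. -/
def Omeg (U : Type*) [Fintype U] [DecidableEq U] : Finset (U → Fin 3) :=
  Finset.univ.filter (fun f => ∀ k : Fin 3,
    (Finset.univ.filter (fun u => f u = k)).card = Fintype.card U / 3)

lemma mem_Omeg {f : U → Fin 3} : f ∈ Omeg U ↔ ∀ k : Fin 3,
    (Finset.univ.filter (fun u => f u = k)).card = Fintype.card U / 3 := by
  simp [Omeg]

lemma omeg_comp_swap {f : U → Fin 3} (hf : f ∈ Omeg U) (z u : U) :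
    (f ∘ Equiv.swap z u) ∈ Omeg U := by
  rw [mem_Omeg] at hf ⊢
  intro k
  rw [← hf k]
  apply Finset.card_bij (fun v _ => Equiv.swap z u v)
  · intro v hv
    simp only [mem_filter, mem_univ, true_and, Function.comp_apply] at hv ⊢
    exact hv
  · intro v1 _ v2 _ h
    exact (Equiv.swap z u).injective h
  · intro w hw
    simp only [mem_filter, mem_univ, true_and, Function.comp_apply] at hw ⊢
    exact ⟨Equiv.swap z u w, by simpa using hw, by simp⟩

lemma key (hU : 3 ∣ Fintype.card U) (x y z : U) (Z : Finset U) (hz : z ∈ Z)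
    (hxZ : x ∉ Z) (hyZ : y ∉ Z) :
    3 * ((Omeg U).filter (fun f => ∀ w ∈ Z, f w = f x ∨ f w = f y)).card ≤
    2 * ((Omeg U).filter (fun f => ∀ w ∈ Z.erase z, f w = f x ∨ f w = f y)).card := by
  classical
  set t := Fintype.card U / 3 with ht
  have hcard3 : 3 ≤ Fintype.card U := Nat.le_of_dvd (Fintype.card_pos_iff.2 ⟨x⟩) hU
  have ht1 : 1 ≤ t := (Nat.one_le_div_iff (by norm_num)).2 hcard3
  have hzx : z ≠ x := fun h => hxZ (h ▸ hz)
  have hzy : z ≠ y := fun h => hyZ (h ▸ hz)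
  set A := (Omeg U).filter (fun f => ∀ w ∈ Z, f w = f x ∨ f w = f y) with hA
  set E := (Omeg U).filter (fun f => ∀ w ∈ Z.erase z, f w = f x ∨ f w = f y) with hE
  set B := E.filter (fun f => ¬ (f z = f x ∨ f z = f y)) with hB
  have hsplit : E.card = A.card + B.card := by
    have h1 : E.filter (fun f => f z = f x ∨ f z = f y) = A := by
      ext f
      simp only [hA, hE, mem_filter, and_assoc]
      constructor
      · rintro ⟨h0, h1, h2⟩
        refine ⟨h0, fun w hw => ?_⟩
        rcases eq_or_ne w z with rfl | hwz
        · exact h2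
        · exact h1 w (Finset.mem_erase.2 ⟨hwz, hw⟩)
      · rintro ⟨h0, h⟩
        exact ⟨h0, fun w hw => h w (Finset.mem_of_mem_erase hw), h z hz⟩
    have h2 : A.card + B.card = E.card := by
      rw [← h1, hB]
      exact Finset.card_filter_add_card_filter_not _
    omega
  -- membership characterizations
  have memA : ∀ {f : U → Fin 3}, f ∈ A ↔
      f ∈ Omeg U ∧ ∀ w ∈ Z, f w = f x ∨ f w = f y := by
    intro f; simp [hA, mem_filter]
  have memB : ∀ {g : U → Fin 3}, g ∈ B ↔
      (g ∈ Omeg U ∧ ∀ w ∈ Z.erase z, g w = g x ∨ g w = g y) ∧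
        ¬ (g z = g x ∨ g z = g y) := by
    intro g; simp [hB, hE, mem_filter, and_assoc]
  have hAB : A.card ≤ 2 * B.card := by
    set c : (U → Fin 3) → Fin 3 := fun f => third (f x) (f y) with hc
    set S := A.biUnion (fun f => ({f} : Finset (U → Fin 3)) ×ˢ
      (univ.filter (fun u => f u = c f))) with hS
    set T := B.biUnion (fun g => ({g} : Finset (U → Fin 3)) ×ˢ
      (univ.filter (fun u => g u = g x ∨ g u = g y))) with hT
    have memS : ∀ {p : (U → Fin 3) × U}, p ∈ S ↔ p.1 ∈ A ∧ p.1 p.2 = c p.1 := by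
      intro p
      simp only [hS, mem_biUnion, mem_product, mem_singleton, mem_filter, mem_univ, true_and]
      constructor
      · rintro ⟨f, hf, rfl, h⟩; exact ⟨hf, h⟩
      · rintro ⟨hf, h⟩; exact ⟨p.1, hf, rfl, h⟩
    have memT : ∀ {p : (U → Fin 3) × U}, p ∈ T ↔ p.1 ∈ B ∧
        (p.1 p.2 = p.1 x ∨ p.1 p.2 = p.1 y) := by
      intro p
      simp only [hT, mem_biUnion, mem_product, mem_singleton, mem_filter, mem_univ, true_and]
      constructor
      · rintro ⟨f, hf, rfl, h⟩; exact ⟨hf, h⟩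
      · rintro ⟨hf, h⟩; exact ⟨p.1, hf, rfl, h⟩
    have hdisj : ∀ f ∈ A, ∀ g ∈ A, f ≠ g → Disjoint
        (({f} : Finset (U → Fin 3)) ×ˢ (univ.filter (fun u => f u = c f)))
        (({g} : Finset (U → Fin 3)) ×ˢ (univ.filter (fun u => g u = c g))) := by
      intro f _ g _ hfg
      simp only [Finset.disjoint_left, mem_product, mem_singleton]
      rintro p ⟨rfl, -⟩ ⟨h, -⟩
      exact hfg h
    have hScard : S.card = t * A.card := by
      rw [hS, Finset.card_biUnion hdisj]
      calc ∑ f ∈ A, (({f} : Finset (U → Fin 3)) ×ˢ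
            (univ.filter (fun u => f u = c f))).card
          = ∑ f ∈ A, t := by
            apply Finset.sum_congr rfl
            intro f hf
            rw [Finset.card_product, Finset.card_singleton, one_mul]
            exact (mem_Omeg.1 (memA.1 hf).1) (c f)
        _ = t * A.card := by rw [Finset.sum_const, smul_eq_mul, mul_comm]
    have hTcard : T.card ≤ 2 * t * B.card := by
      calc T.card ≤ ∑ g ∈ B, (({g} : Finset (U → Fin 3)) ×ˢ
            (univ.filter (fun u => g u = g x ∨ g u = g y))).card :=
          Finset.card_biUnion_le
        _ ≤ ∑ g ∈ B, 2 * t := by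
          apply Finset.sum_le_sum
          intro g hg
          rw [Finset.card_product, Finset.card_singleton, one_mul]
          have hbal := mem_Omeg.1 (memB.1 hg).1.1
          calc (univ.filter (fun u => g u = g x ∨ g u = g y)).card
              ≤ (univ.filter (fun u => g u = g x)).card +
                (univ.filter (fun u => g u = g y)).card := by
                rw [Finset.filter_or]; exact Finset.card_union_le _ _
            _ = t + t := by rw [hbal (g x), hbal (g y)]
            _ = 2 * t := by ring
        _ = 2 * t * B.card := by rw [Finset.sum_const, smul_eq_mul, mul_comm]
    have hST : S.card ≤ T.card := by
      apply Finset.card_le_card_of_injOn (fun p => (p.1 ∘ Equiv.swap z p.2, p.2))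
      · rintro ⟨f, u⟩ hp
        obtain ⟨hfA, hfu⟩ := memS.1 hp
        dsimp only at hfA hfu ⊢
        obtain ⟨hfΩ, hfZ⟩ := memA.1 hfA
        have hcnx : c f ≠ f x := (third_ne (f x) (f y)).1
        have hcny : c f ≠ f y := (third_ne (f x) (f y)).2
        have hfz : f z = f x ∨ f z = f y := hfZ z hz
        have hux : u ≠ x := fun h => hcnx (h ▸ hfu).symm
        have huy : u ≠ y := fun h => hcny (h ▸ hfu).symm
        set g := f ∘ Equiv.swap z u with hg
        have hgx : g x = f x := by simp [hg, Equiv.swap_apply_of_ne_of_ne (Ne.symm hzx) (Ne.symm hux)]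
        have hgy : g y = f y := by simp [hg, Equiv.swap_apply_of_ne_of_ne (Ne.symm hzy) (Ne.symm huy)]
        have hgz : g z = f u := by simp [hg]
        have hgu : g u = f z := by simp [hg]
        refine memT.2 ⟨memB.2 ⟨⟨omeg_comp_swap hfΩ z u, ?_⟩, ?_⟩, ?_⟩
        · dsimp only
          intro w hw
          obtain ⟨hwz, hwZ⟩ := Finset.mem_erase.1 hw
          have hwu : w ≠ u := by
            intro h
            subst h
            rcases hfZ w hwZ with h' | h'
            · exact hcnx (hfu.symm.trans h')
            · exact hcny (hfu.symm.trans h')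
          have : g w = f w := by
            simp [hg, Equiv.swap_apply_of_ne_of_ne hwz hwu]
          rw [this, hgx, hgy]
          exact hfZ w hwZ
        · dsimp only
          rw [hgz, hgx, hgy, hfu]
          push_neg
          exact ⟨hcnx, hcny⟩
        · dsimp only
          rw [hgu, hgx, hgy]
          exact hfz
      · rintro ⟨f1, u1⟩ hp1 ⟨f2, u2⟩ hp2 h
        simp only [Prod.mk.injEq] at h
        obtain ⟨hf, hu⟩ := h
        subst hu
        have : f1 = f2 := by
          funext v
          have := congrFun hf (Equiv.swap z u1 v)
          simpa using this
        rw [this]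
    -- combine: t * A.card ≤ 2 * t * B.card
    have : t * A.card ≤ t * (2 * B.card) := by
      rw [hScard] at hST
      calc t * A.card ≤ T.card := hST
        _ ≤ 2 * t * B.card := hTcard
        _ = t * (2 * B.card) := by ring
    exact Nat.le_of_mul_le_mul_left this (by omega)
  omega

lemma main_nat (hU : 3 ∣ Fintype.card U) (x y : U) (Z : Finset U)
    (hx : x ∉ Z) (hy : y ∉ Z) :
    3 ^ Z.card * ((Omeg U).filter (fun f => ∀ w ∈ Z, f w = f x ∨ f w = f y)).card ≤
    2 ^ Z.card * (Omeg U).card := by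
  classical
  induction Z using Finset.induction_on with
  | empty =>
    simp
  | @insert a Z ha ih =>
    have hx' : x ∉ Z := fun h => hx (Finset.mem_insert_of_mem h)
    have hy' : y ∉ Z := fun h => hy (Finset.mem_insert_of_mem h)
    have hkey := key hU x y a (insert a Z) (Finset.mem_insert_self a Z) hx hy
    rw [Finset.erase_insert ha] at hkey
    have ih' := ih hx' hy'
    rw [Finset.card_insert_of_notMem ha]
    calc 3 ^ (Z.card + 1) * ((Omeg U).filter
          (fun f => ∀ w ∈ insert a Z, f w = f x ∨ f w = f y)).card
        = 3 ^ Z.card * (3 * ((Omeg U).filter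
          (fun f => ∀ w ∈ insert a Z, f w = f x ∨ f w = f y)).card) := by ring
      _ ≤ 3 ^ Z.card * (2 * ((Omeg U).filter
          (fun f => ∀ w ∈ Z, f w = f x ∨ f w = f y)).card) :=
          Nat.mul_le_mul_left _ hkey
      _ = 2 * (3 ^ Z.card * ((Omeg U).filter
          (fun f => ∀ w ∈ Z, f w = f x ∨ f w = f y)).card) := by ring
      _ ≤ 2 * (2 ^ Z.card * (Omeg U).card) := Nat.mul_le_mul_left _ ih'
      _ = 2 ^ (Z.card + 1) * (Omeg U).card := by ring

end Stmt16Aux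

/-- A uniformly random partition of a finite set `U` into three equal parts is modeled by
the set of functions `f : U → Fin 3` all of whose fibers have size `|U|/3`. -/
theorem stmt_16 {U : Type*} [Fintype U] [DecidableEq U]
    (hU : 3 ∣ Fintype.card U) (x y : U) (Z : Finset U) (m : ℕ)
    (hZ : Z.card = m) (hx : x ∉ Z) (hy : y ∉ Z) :
    let Ω : Finset (U → Fin 3) :=
      Finset.univ.filter (fun f => ∀ k : Fin 3,
        (Finset.univ.filter (fun u => f u = k)).card = Fintype.card U / 3)
    ((Ω.filter (fun f => ∀ z ∈ Z, f z = f x ∨ f z = f y)).card : ℝ) ≤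
      (2 / 3 : ℝ) ^ m * Ω.card := by
  intro Ω
  have hΩ : Ω = Stmt16Aux.Omeg U := rfl
  have hnat := Stmt16Aux.main_nat hU x y Z hx hy
  rw [hZ] at hnat
  have hcast : (3 : ℝ) ^ m * ((Ω.filter (fun f => ∀ z ∈ Z, f z = f x ∨ f z = f y)).card : ℝ)
      ≤ (2 : ℝ) ^ m * (Ω.card : ℝ) := by
    rw [hΩ]
    exact_mod_cast hnat
  rw [div_pow, div_mul_eq_mul_div, le_div_iff₀ (by positivity)]
  nlinarith [hcast]
end
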